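/- If P₁,…,P_{n+1} lie in the closed unit ball of ℝⁿ and all pairwise distances are equal to √(2(n+1)/n) (i.e. they form a regular simplex realizing the (n+1)-extent of the ball), then all points lie on the unit sphere and their barycenter is the origin. -/

import Mathlib

/-!
Lagrange's identity `∑ᵢ ∑ⱼ ‖Pᵢ - Pⱼ‖² = 2m ∑ᵢ ‖Pᵢ‖² - 2‖∑ᵢ Pᵢ‖²` for `m` points bounds the
total squared pairwise distance of points of the unit ball by `2m²`, with equality only if every
point is a unit vector and the points sum to zero. Equal pairwise distances `√(2(n+1)/n)` among
`m = n + 1` points give exactly `(n+1) n · 2(n+1)/n = 2(n+1)²`.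
-/

open Finset

theorem sum_sum_norm_sub_sq_of_pairwise_eq {ι E : Type*} [Fintype ι] [SeminormedAddGroup E]
    {P : ι → E} {d : ℝ} (h : ∀ i j, i ≠ j → ‖P i - P j‖ = d) :
    ∑ i, ∑ j, ‖P i - P j‖ ^ 2 = Fintype.card ι * (Fintype.card ι - 1) * d ^ 2 := by
  classical
  have hrow : ∀ i, ∑ j, ‖P i - P j‖ ^ 2 = (Fintype.card ι - 1) * d ^ 2 := by
    intro i
    rw [← add_sum_erase _ _ (mem_univ i),
      sum_congr rfl fun j hj => by rw [h i j (ne_of_mem_erase hj).symm],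
      sum_const, card_erase_of_mem (mem_univ i), card_univ, nsmul_eq_mul,
      Nat.cast_pred (Fintype.card_pos_iff.mpr ⟨i⟩)]
    simp
  simp only [hrow, sum_const, card_univ, nsmul_eq_mul]
  ring

section InnerProductSpace

variable {ι E : Type*} [Fintype ι] [NormedAddCommGroup E] [InnerProductSpace ℝ E]

theorem sum_sum_norm_sub_sq (P : ι → E) :
    ∑ i, ∑ j, ‖P i - P j‖ ^ 2
      = 2 * Fintype.card ι * ∑ i, ‖P i‖ ^ 2 - 2 * ‖∑ i, P i‖ ^ 2 := by
  have hS : ‖∑ i, P i‖ ^ 2 = ∑ i, ∑ j, inner ℝ (P i) (P j) := by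
    rw [← real_inner_self_eq_norm_sq, sum_inner]
    exact sum_congr rfl fun i _ => inner_sum _ _ _
  simp only [norm_sub_sq_real, hS, sum_add_distrib, sum_sub_distrib, ← mul_sum, sum_const,
    card_univ, nsmul_eq_mul]
  ring

theorem norm_eq_one_and_sum_eq_zero_of_sum_sum_norm_sub_sq {P : ι → E} (hP : ∀ i, ‖P i‖ ≤ 1)
    (h : 2 * (Fintype.card ι : ℝ) ^ 2 ≤ ∑ i, ∑ j, ‖P i - P j‖ ^ 2) :
    (∀ i, ‖P i‖ = 1) ∧ ∑ i, P i = 0 := by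
  have hsq : ∀ i, ‖P i‖ ^ 2 ≤ 1 := fun i => pow_le_one₀ (norm_nonneg _) (hP i)
  have hT : ∑ i, ‖P i‖ ^ 2 ≤ Fintype.card ι := by
    simpa using sum_le_sum fun i (_ : i ∈ univ) => hsq i
  rw [sum_sum_norm_sub_sq] at h
  have hS : ‖∑ i, P i‖ ^ 2 = 0 := by
    nlinarith [sq_nonneg ‖∑ i, P i‖,
      mul_le_mul_of_nonneg_left hT (Nat.cast_nonneg (Fintype.card ι))]
  refine ⟨fun i => ?_, norm_eq_zero.mp (pow_eq_zero_iff two_ne_zero |>.mp hS)⟩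
  have hm : (0 : ℝ) < Fintype.card ι := Nat.cast_pos.mpr (Fintype.card_pos_iff.mpr ⟨i⟩)
  have hdefect : ∑ j, (1 - ‖P j‖ ^ 2) = 0 := by
    rw [sum_sub_distrib]
    simp only [sum_const, card_univ, nsmul_eq_mul, mul_one]
    nlinarith
  have hi := (sum_eq_zero_iff_of_nonneg fun j _ => sub_nonneg.mpr (hsq j)).mp hdefect i
    (mem_univ i)
  exact (pow_eq_one_iff_of_nonneg (norm_nonneg _) two_ne_zero).mp (by linarith)

end InnerProductSpace

/-- If `n+1` points of the closed unit ball of `ℝⁿ` have all pairwise distances equal to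
`√(2(n+1)/n)`, then they all lie on the unit sphere and their barycenter is the origin. -/
theorem regular_simplex_extremal (n : ℕ) (hn : 1 ≤ n)
    (P : Fin (n + 1) → EuclideanSpace ℝ (Fin n)) (hP : ∀ k, ‖P k‖ ≤ 1)
    (hdist : ∀ k j, k ≠ j → ‖P k - P j‖ = Real.sqrt (2 * (n + 1) / n)) :
    (∀ k, ‖P k‖ = 1) ∧ ((n + 1 : ℝ))⁻¹ • (∑ k : Fin (n + 1), P k) = 0 := by
  have hn0 : (n : ℝ) ≠ 0 := by positivity
  have htotal : ∑ k, ∑ j, ‖P k - P j‖ ^ 2 = 2 * (n + 1 : ℝ) ^ 2 := by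
    rw [sum_sum_norm_sub_sq_of_pairwise_eq hdist, Real.sq_sqrt (by positivity)]
    simp only [Fintype.card_fin, Nat.cast_add, Nat.cast_one, add_sub_cancel_right]
    field_simp
  obtain ⟨hnorm, hsum⟩ := norm_eq_one_and_sum_eq_zero_of_sum_sum_norm_sub_sq hP
    (by simp [htotal])
  exact ⟨hnorm, by rw [hsum, smul_zero]⟩
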